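/- If R is a finite commutative ring with identity, |R| = l, which is not an integral domain, and |Ann(x)| = m for every nonzero zero-divisor x ∈ Z(R), then |{(x,y) ∈ R × R : xy = 0}| = 2l + (m-1)k - 1, where k = |Z(R)|. -/

import Mathlib

/-!
Count the pairs `(x, y)` with `x * y = 0` and `y ≠ 0` row by row. The row `x = 0` has `l - 1`
of them, a nonzero zero-divisor has `m - 1` (its annihilator minus `0`), and any other nonzero
`x` has none. Adding the `l` pairs with `y = 0` gives `l + (l - 1) + (m - 1) k`.
-/

open Finset

section MulZeroClass

variable {R : Type*} [MulZeroClass R] [Fintype R] [DecidableEq R]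

theorem card_filter_mul_eq_zero_eq_sum :
    #{p : R × R | p.1 * p.2 = 0} = ∑ x : R, #{y : R | x * y = 0} := by
  rw [card_filter, Fintype.sum_prod_type]
  simp only [card_filter]

theorem card_filter_ne_zero_and_mul_eq_zero_add_one (x : R) :
    #{y : R | y ≠ 0 ∧ x * y = 0} + 1 = #{y : R | x * y = 0} := by
  have hErase : ({y : R | y ≠ 0 ∧ x * y = 0} : Finset R) = ({y : R | x * y = 0} : Finset R).erase 0 := by
    ext y
    simp
  rw [hErase, card_erase_add_one (by simp)]

theorem card_filter_ne_zero_and_zero_mul_eq_zero :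
    #{y : R | y ≠ 0 ∧ (0 : R) * y = 0} = Fintype.card R - 1 := by
  simp only [zero_mul, and_true, filter_ne', card_erase_of_mem (mem_univ _), card_univ]

theorem sum_card_filter_ne_zero_and_mul_eq_zero :
    ∑ x : R, #{y : R | y ≠ 0 ∧ x * y = 0} =
      (Fintype.card R - 1) +
        ∑ x ∈ {x : R | x ≠ 0 ∧ ∃ y : R, y ≠ 0 ∧ x * y = 0}, #{y : R | y ≠ 0 ∧ x * y = 0} := by
  rw [← add_sum_erase _ _ (mem_univ 0), card_filter_ne_zero_and_zero_mul_eq_zero]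
  congr 1
  refine (sum_subset (fun x hx => ?_) fun x hx hxZ => ?_).symm
  · exact mem_erase.mpr ⟨(mem_filter.mp hx).2.1, mem_univ x⟩
  · rw [card_eq_zero, filter_eq_empty_iff]
    exact fun y _ hy => hxZ (mem_filter.mpr ⟨mem_univ x, (mem_erase.mp hx).1, y, hy⟩)

end MulZeroClass

theorem stmt_4_general (R : Type*) [CommRing R] [Fintype R] [DecidableEq R]
    (l m k : ℕ) (hl : Fintype.card R = l)
    (hk : k = (Finset.univ.filter fun x : R => x ≠ 0 ∧ ∃ y : R, y ≠ 0 ∧ x * y = 0).card)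
    (hm : ∀ x : R, (x ≠ 0 ∧ ∃ y : R, y ≠ 0 ∧ x * y = 0) →
      (Finset.univ.filter fun y : R => x * y = 0).card = m) :
    (Finset.univ.filter fun p : R × R => p.1 * p.2 = 0).card = 2 * l + (m - 1) * k - 1 := by
  have hrow : ∀ x : R, (x ≠ 0 ∧ ∃ y : R, y ≠ 0 ∧ x * y = 0) →
      #{y : R | y ≠ 0 ∧ x * y = 0} = m - 1 := fun x hx => by
    rw [← hm x hx, ← card_filter_ne_zero_and_mul_eq_zero_add_one, Nat.add_sub_cancel]
  have hl1 : 1 ≤ l := hl ▸ Fintype.card_pos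
  calc #{p : R × R | p.1 * p.2 = 0}
      = ∑ x : R, (#{y : R | y ≠ 0 ∧ x * y = 0} + 1) := by
        simp only [card_filter_ne_zero_and_mul_eq_zero_add_one, card_filter_mul_eq_zero_eq_sum]
    _ = (l - 1) + (m - 1) * k + l := by
        rw [sum_add_distrib, sum_card_filter_ne_zero_and_mul_eq_zero, sum_congr rfl
          fun x hx => hrow x (mem_filter.mp hx).2, sum_const, smul_eq_mul, ← hk,
          sum_const, smul_eq_mul, mul_one, card_univ, hl, mul_comm]
    _ = 2 * l + (m - 1) * k - 1 := by omega

theorem stmt_4 (R : Type*) [CommRing R] [Fintype R] [Nontrivial R] [DecidableEq R]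
    (l m k : ℕ) (hl : Fintype.card R = l)
    (hnd : ∃ x : R, x ≠ 0 ∧ ∃ y : R, y ≠ 0 ∧ x * y = 0)
    (hk : k = (Finset.univ.filter fun x : R => x ≠ 0 ∧ ∃ y : R, y ≠ 0 ∧ x * y = 0).card)
    (hm : ∀ x : R, (x ≠ 0 ∧ ∃ y : R, y ≠ 0 ∧ x * y = 0) →
      (Finset.univ.filter fun y : R => x * y = 0).card = m) :
    (Finset.univ.filter fun p : R × R => p.1 * p.2 = 0).card = 2 * l + (m - 1) * k - 1 :=
  stmt_4_general R l m k hl hk hm
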